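/- Let (R, α) be a multiplicative Hom-Lie conformal superalgebra. Then [QDer(R)_λ QC(R)] ⊆ QC(R)[λ]: for any homogeneous D ∈ QDer_{α^k}(R) and D' ∈ QC_{α^s}(R), the commutator [D_λ D'] is an α^{k+s}-quasicentroid of R with polynomial coefficients in λ. -/

import Mathlib

noncomputable section

namespace HLCS

open scoped BigOperators

/-- Evaluation at `l : ℂ` of a polynomial (in `λ`) with coefficients in `M`,
encoded as a finitely supported family of coefficients. -/
def pev {M : Type} [AddCommGroup M] [Module ℂ M] (l : ℂ) (p : ℕ →₀ M) : M :=
  p.sum fun n r => l ^ n • r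

/-- Evaluation of a polynomial with coefficients in `M` at an operator `T`
(used for substitutions such as `-λ - ∂`). -/
def pevOp {M : Type} [AddCommGroup M] [Module ℂ M] (T : Module.End ℂ M) (p : ℕ →₀ M) : M :=
  p.sum fun n r => (T ^ n) r

/-- The super sign `(-1)^{|a||b|}` attached to parities `i`, `j`. -/
def sg (i j : ZMod 2) : ℂ := (-1 : ℂ) ^ (i * j).val

/-- The data of a `ℤ₂`-graded `ℂ[∂]`-module `R` with an endomorphism `α` and a
`ℂ`-bilinear `λ`-bracket with values in `ℂ[λ] ⊗ R` (encoded by its coefficients). -/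
structure Data (R : Type) [AddCommGroup R] [Module ℂ R] where
  der : Module.End ℂ R
  alpha : Module.End ℂ R
  G : ZMod 2 → Submodule ℂ R
  br : R →ₗ[ℂ] R →ₗ[ℂ] (ℕ →₀ R)

namespace Data

variable {R : Type} [AddCommGroup R] [Module ℂ R] (S : Data R)

/-- `[a_λ b]` evaluated at `λ = l`. -/
def lb (l : ℂ) (a b : R) : R := pev l (S.br a b)

/-- `[a_{-l-∂} b]` : the bracket with `-l - ∂` substituted for `λ`. -/
def lbOp (l : ℂ) (a b : R) : R :=
  pevOp ((-l) • (1 : Module.End ℂ R) - S.der) (S.br a b)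

/-- Multiplicativity: `α [a_λ b] = [α(a)_λ α(b)]`. -/
def Mult : Prop := ∀ (l : ℂ) (a b : R), S.alpha (S.lb l a b) = S.lb l (S.alpha a) (S.alpha b)

end Data

variable {R : Type} [AddCommGroup R] [Module ℂ R]

/-- `(R, α)` with the given data is a Hom-Lie conformal superalgebra.
All polynomial identities in `λ, μ` are stated by evaluating at arbitrary
complex numbers (which is equivalent, `ℂ` being infinite). -/
structure IsHLCS (S : Data R) : Prop where
  internal : DirectSum.IsInternal S.G
  der_even : ∀ i, ∀ a ∈ S.G i, S.der a ∈ S.G i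
  alpha_even : ∀ i, ∀ a ∈ S.G i, S.alpha a ∈ S.G i
  alpha_der : ∀ a, S.alpha (S.der a) = S.der (S.alpha a)
  br_grade : ∀ i j, ∀ a ∈ S.G i, ∀ b ∈ S.G j, ∀ n, S.br a b n ∈ S.G (i + j)
  conf_left : ∀ (l : ℂ) (a b : R), S.lb l (S.der a) b = -l • S.lb l a b
  conf_right : ∀ (l : ℂ) (a b : R), S.lb l a (S.der b) = S.der (S.lb l a b) + l • S.lb l a b
  skew : ∀ i j, ∀ a ∈ S.G i, ∀ b ∈ S.G j, ∀ l : ℂ,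
    S.lb l a b = (-sg i j) • S.lbOp l b a
  jacobi : ∀ i j, ∀ a ∈ S.G i, ∀ b ∈ S.G j, ∀ (c : R) (l m : ℂ),
    S.lb l (S.alpha a) (S.lb m b c) =
      S.lb (l + m) (S.lb l a b) (S.alpha c) + sg i j • S.lb m (S.alpha b) (S.lb l a c)

end HLCS
namespace HLCS

variable {R : Type} [AddCommGroup R] [Module ℂ R]

/-- A homogeneous conformal linear map of parity `d` on `R`, encoded as the family of
its evaluations `F l : R → R` (`l : ℂ`): it is `ℂ`-linear, polynomial in `l`, and
satisfies `F_λ(∂a) = (∂ + λ) F_λ(a)`. -/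
structure IsConfMap (S : Data R) (d : ZMod 2) (F : ℂ → R → R) : Prop where
  map_add : ∀ (l : ℂ) (a b : R), F l (a + b) = F l a + F l b
  map_smul : ∀ (l c : ℂ) (a : R), F l (c • a) = c • F l a
  poly : ∀ a : R, ∃ p : ℕ →₀ R, ∀ l : ℂ, F l a = pev l p
  conf : ∀ (l : ℂ) (a : R), F l (S.der a) = S.der (F l a) + l • F l a
  grade : ∀ i, ∀ a ∈ S.G i, ∀ l : ℂ, F l a ∈ S.G (i + d)

/-- Membership in `Ω`: a homogeneous conformal linear map commuting with `α`. -/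
def InOmega (S : Data R) (d : ZMod 2) (F : ℂ → R → R) : Prop :=
  IsConfMap S d F ∧ ∀ (l : ℂ) (a : R), F l (S.alpha a) = S.alpha (F l a)

/-- An `α^k`-derivation of parity `d`. -/
def IsDer (S : Data R) (k : ℕ) (d : ZMod 2) (F : ℂ → R → R) : Prop :=
  InOmega S d F ∧ ∀ i, ∀ a ∈ S.G i, ∀ (b : R) (l m : ℂ),
    F l (S.lb m a b) =
      S.lb (l + m) (F l a) ((S.alpha ^ k) b) +
        ((-1 : ℂ) ^ ((i * d).val)) • S.lb m ((S.alpha ^ k) a) (F l b)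

/-- The commutator `[D_λ D']_μ (a) = D_λ(D'_{μ-λ}(a)) - (-1)^{|D||D'|} D'_{μ-λ}(D_λ(a))`,
with `e = (-1)^{|D||D'|}`; first argument `l` is `λ`, second `m` is `μ`. -/
def brkt (e : ℂ) (F G : ℂ → R → R) : ℂ → ℂ → R → R :=
  fun l m a => F l (G (m - l) a) - e • G (m - l) (F l a)

/-- The twist `α'(D) = D ∘ α`. -/
def tw (S : Data R) (F : ℂ → R → R) : ℂ → R → R := fun l a => F l (S.alpha a)

/-- A generalized `α^k`-derivation of parity `d`. -/
def IsGDer (S : Data R) (k : ℕ) (d : ZMod 2) (F : ℂ → R → R) : Prop :=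
  InOmega S d F ∧ ∃ F' F'' : ℂ → R → R, InOmega S d F' ∧ InOmega S d F'' ∧
    ∀ i, ∀ a ∈ S.G i, ∀ (b : R) (l m : ℂ),
      S.lb (l + m) (F m a) ((S.alpha ^ k) b) +
        ((-1 : ℂ) ^ ((d * i).val)) • S.lb l ((S.alpha ^ k) a) (F' m b) = F'' m (S.lb l a b)

/-- An `α^k`-quasiderivation of parity `d`. -/
def IsQDer (S : Data R) (k : ℕ) (d : ZMod 2) (F : ℂ → R → R) : Prop :=
  InOmega S d F ∧ ∃ F' : ℂ → R → R, InOmega S d F' ∧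
    ∀ i, ∀ a ∈ S.G i, ∀ (b : R) (l m : ℂ),
      S.lb (l + m) (F m a) ((S.alpha ^ k) b) +
        ((-1 : ℂ) ^ ((d * i).val)) • S.lb l ((S.alpha ^ k) a) (F m b) = F' m (S.lb l a b)

/-- An `α^k`-centroid of parity `d`. -/
def IsCent (S : Data R) (k : ℕ) (d : ZMod 2) (F : ℂ → R → R) : Prop :=
  InOmega S d F ∧ ∀ i, ∀ a ∈ S.G i, ∀ (b : R) (l m : ℂ),
    S.lb (l + m) (F m a) ((S.alpha ^ k) b) =
      ((-1 : ℂ) ^ ((d * i).val)) • S.lb l ((S.alpha ^ k) a) (F m b) ∧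
    S.lb (l + m) (F m a) ((S.alpha ^ k) b) = F m (S.lb l a b)

/-- An `α^k`-quasicentroid of parity `d`. -/
def IsQC (S : Data R) (k : ℕ) (d : ZMod 2) (F : ℂ → R → R) : Prop :=
  InOmega S d F ∧ ∀ i, ∀ a ∈ S.G i, ∀ (b : R) (l m : ℂ),
    S.lb (l + m) (F m a) ((S.alpha ^ k) b) =
      ((-1 : ℂ) ^ ((d * i).val)) • S.lb l ((S.alpha ^ k) a) (F m b)

/-- An `α^k`-central derivation of parity `d`. -/
def IsZDer (S : Data R) (k : ℕ) (d : ZMod 2) (F : ℂ → R → R) : Prop :=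
  InOmega S d F ∧ ∀ (a b : R) (l m : ℂ),
    S.lb (l + m) (F m a) ((S.alpha ^ k) b) = 0 ∧ F m (S.lb l a b) = 0

/-- Membership in the center `Z(R)`. -/
def IsCentral (S : Data R) (x : R) : Prop := ∀ (l : ℂ) (y : R), S.lb l x y = 0

end HLCS
namespace HLCS

variable {R : Type} [AddCommGroup R] [Module ℂ R]

/-! Write `μ' = μ - λ`. The quasiderivation identity of `D` at `D'_{μ'} a` and `α^s b`,
followed by the quasicentroid identity of `D'` and the quasiderivation identity of `D` at
`α^s a` and `D'_{μ'} b`, expresses `[(D_λ D'_{μ'} a)_{ν+μ} α^{k+s} b]` through brackets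
`[α^{k+s} a_ν ·]` and the cross term `[(D_λ α^s a)_{ν+λ} α^k D'_{μ'} b]`. The quasicentroid
identity of `D'` at `D_λ a` turns `[(D'_{μ'} D_λ a)_{ν+μ} α^{k+s} b]` into the same cross
term, which therefore cancels in `[(D_λ D')_μ a _{ν+μ} α^{k+s} b]`; what remains is
`(-1)^{(|D|+|D'|)|a|} [α^{k+s} a_ν (D_λ D')_μ b]`. -/

theorem neg_one_pow_val_add {A : Type*} [Ring A] (x y : ZMod 2) :
    (-1 : A) ^ (x + y).val = (-1) ^ x.val * (-1) ^ y.val := by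
  rw [ZMod.val_add, ← neg_one_pow_eq_pow_mod_two, pow_add]

theorem neg_one_pow_val_mul_self {A : Type*} [Ring A] (x : ZMod 2) :
    (-1 : A) ^ x.val * (-1) ^ x.val = 1 := by
  rw [← pow_add, ← two_mul, pow_mul, neg_one_sq, one_pow]

section PolynomialFunctions

variable {M N : Type} [AddCommGroup M] [Module ℂ M] [AddCommGroup N] [Module ℂ N]

def pevₗ (l : ℂ) : (ℕ →₀ M) →ₗ[ℂ] M := Finsupp.lsum ℂ fun n => l ^ n • LinearMap.id

variable (M) in
def polyFuns : Submodule ℂ (ℂ → M) :=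
  LinearMap.range
    (LinearMap.pi fun l : ℂ => (PolynomialModule.eval l : PolynomialModule ℂ M →ₗ[ℂ] M))

theorem mem_polyFuns_iff {f : ℂ → M} :
    f ∈ polyFuns M ↔ ∃ p : ℕ →₀ M, ∀ l, f l = pev l p := by
  constructor
  · rintro ⟨q, rfl⟩
    exact ⟨q.coeff, fun l => rfl⟩
  · rintro ⟨p, hp⟩
    exact ⟨PolynomialModule.ofCoeff ℂ p, funext fun l => (hp l).symm⟩

theorem linearMap_comp_mem_polyFuns (T : M →ₗ[ℂ] N) {f : ℂ → M} (hf : f ∈ polyFuns M) :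
    (fun l => T (f l)) ∈ polyFuns N := by
  obtain ⟨q, rfl⟩ := hf
  exact ⟨PolynomialModule.map ℂ T q, funext fun l => PolynomialModule.eval_map ℂ T q l⟩

open Polynomial in
theorem comp_sub_const_mem_polyFuns (c : ℂ) {f : ℂ → M} (hf : f ∈ polyFuns M) :
    (fun l => f (l - c)) ∈ polyFuns M := by
  obtain ⟨q, rfl⟩ := hf
  refine ⟨PolynomialModule.comp (X - C c) q, funext fun l => ?_⟩
  exact (PolynomialModule.comp_eval _ q l).trans (by simp)

end PolynomialFunctions

namespace Data

variable (S : Data R)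

def lbₗ (l : ℂ) : R →ₗ[ℂ] R →ₗ[ℂ] R := S.br.compr₂ (pevₗ l)

theorem lbₗ_apply (l : ℂ) (a b : R) : S.lbₗ l a b = S.lb l a b := rfl

theorem lb_sub_left (l : ℂ) (a b c : R) : S.lb l (a - b) c = S.lb l a c - S.lb l b c := by
  simp only [← lbₗ_apply, map_sub, LinearMap.sub_apply]

theorem lb_sub_right (l : ℂ) (a b c : R) : S.lb l a (b - c) = S.lb l a b - S.lb l a c := by
  simp only [← lbₗ_apply, map_sub]

theorem lb_smul_left (l c : ℂ) (a b : R) : S.lb l (c • a) b = c • S.lb l a b := by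
  simp only [← lbₗ_apply, map_smul, LinearMap.smul_apply]

theorem lb_smul_right (l c : ℂ) (a b : R) : S.lb l a (c • b) = c • S.lb l a b := by
  simp only [← lbₗ_apply, map_smul]

end Data

variable {S : Data R} {k s : ℕ} {d d' i : ZMod 2} {F G : ℂ → R → R} {a : R}

theorem IsHLCS.alpha_pow_mem (hS : IsHLCS S) (k : ℕ) (ha : a ∈ S.G i) :
    (S.alpha ^ k) a ∈ S.G i := by
  induction k with
  | zero => exact ha
  | succ k ih =>
    rw [pow_succ', Module.End.mul_apply]
    exact hS.alpha_even i _ ih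

theorem InOmega.map_alpha_pow (hF : InOmega S d F) (k : ℕ) (l : ℂ) (a : R) :
    F l ((S.alpha ^ k) a) = (S.alpha ^ k) (F l a) := by
  induction k with
  | zero => rfl
  | succ k ih => rw [pow_succ', Module.End.mul_apply, Module.End.mul_apply, hF.2, ih]

theorem IsConfMap.brkt (hF : IsConfMap S d F) (hG : IsConfMap S d' G) (e l : ℂ) :
    IsConfMap S (d + d') (brkt e F G l) where
  map_add m a b := by
    simp only [HLCS.brkt, hF.map_add, hG.map_add, smul_add]
    abel
  map_smul m c a := by
    simp only [HLCS.brkt, hF.map_smul, hG.map_smul, smul_comm e c]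
    module
  poly a := by
    refine mem_polyFuns_iff.mp (sub_mem ?_ (Submodule.smul_mem _ e ?_))
    · exact linearMap_comp_mem_polyFuns ⟨⟨F l, hF.map_add l⟩, hF.map_smul l⟩
        (comp_sub_const_mem_polyFuns l (mem_polyFuns_iff.mpr (hG.poly a)))
    · exact comp_sub_const_mem_polyFuns l (mem_polyFuns_iff.mpr (hG.poly (F l a)))
  conf m a := by
    simp only [HLCS.brkt, hG.conf, hF.map_add, hF.map_smul, hF.conf, hG.map_add, hG.map_smul,
      map_sub, S.der.map_smul]
    module
  grade i a ha m := by
    refine sub_mem ?_ (Submodule.smul_mem _ e ?_)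
    · simpa only [add_assoc, add_comm d'] using hF.grade _ _ (hG.grade i a ha (m - l)) l
    · simpa only [add_assoc] using hG.grade _ _ (hF.grade i a ha l) (m - l)

theorem InOmega.brkt (hF : InOmega S d F) (hG : InOmega S d' G) (e l : ℂ) :
    InOmega S (d + d') (brkt e F G l) :=
  ⟨hF.1.brkt hG.1 e l, fun m a => by simp only [HLCS.brkt, hF.2, hG.2, map_sub, map_smul]⟩

theorem IsQC.lb_map_left (hG : IsQC S s d' G) (ha : a ∈ S.G i) (b : R) (l m : ℂ) :
    S.lb (l + m) (G m a) ((S.alpha ^ s) b) =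
      (-1 : ℂ) ^ (d' * i).val • S.lb l ((S.alpha ^ s) a) (G m b) :=
  hG.2 i a ha b l m

theorem lb_qc_comp_qder (hF : InOmega S d F) (hG : IsQC S s d' G) (ha : a ∈ S.G i)
    (b : R) (l u m : ℂ) :
    S.lb (u + m) (G (m - l) (F l a)) ((S.alpha ^ (k + s)) b) =
      ((-1 : ℂ) ^ (d' * i).val * (-1) ^ (d * d').val) •
        S.lb (u + l) (F l ((S.alpha ^ s) a)) ((S.alpha ^ k) (G (m - l) b)) := by
  have h := hG.lb_map_left (hF.1.grade i a ha l) ((S.alpha ^ k) b) (u + l) (m - l)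
  rwa [show u + l + (m - l) = u + m by ring, ← Module.End.mul_apply, ← pow_add, add_comm s k,
    mul_add, neg_one_pow_val_add, mul_comm d' d, ← hF.map_alpha_pow, hG.1.map_alpha_pow] at h

theorem lb_qder_comp_qc (hS : IsHLCS S) (hF : IsQDer S k d F) (hG : IsQC S s d' G)
    (ha : a ∈ S.G i) (b : R) (l u m : ℂ) :
    S.lb (u + m) (F l (G (m - l) a)) ((S.alpha ^ (k + s)) b) =
      (-1 : ℂ) ^ (d' * i).val •
          S.lb (u + l) (F l ((S.alpha ^ s) a)) ((S.alpha ^ k) (G (m - l) b)) +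
        ((-1 : ℂ) ^ (d * i).val * (-1) ^ (d' * i).val) •
          S.lb u ((S.alpha ^ (k + s)) a) (F l (G (m - l) b)) -
        ((-1 : ℂ) ^ (d * i).val * (-1) ^ (d' * i).val * (-1) ^ (d * d').val) •
          S.lb u ((S.alpha ^ (k + s)) a) (G (m - l) (F l b)) := by
  obtain ⟨hFΩ, F', ⟨hF'c, -⟩, hFF'⟩ := hF
  have hQDerGa := hFF' (i + d') (G (m - l) a) (hG.1.1.grade i a ha (m - l)) ((S.alpha ^ s) b)
    (u + (m - l)) l
  have hQDerGb := hFF' i ((S.alpha ^ s) a) (hS.alpha_pow_mem s ha) (G (m - l) b) u l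
  have hQCFb := hG.lb_map_left (hS.alpha_pow_mem k ha) (F l b) u (m - l)
  rw [show u + (m - l) + l = u + m by ring, ← Module.End.mul_apply, ← pow_add,
    ← hG.1.map_alpha_pow, hFΩ.map_alpha_pow, hQCFb, hG.lb_map_left ha, hF'c.map_smul,
    ← hQDerGb, mul_add, neg_one_pow_val_add] at hQDerGa
  simp only [← Module.End.mul_apply, ← pow_add, add_comm s k] at hQDerGa
  rw [eq_sub_of_add_eq hQDerGa]
  module

theorem lb_brkt_qder_qc (hS : IsHLCS S) (hF : IsQDer S k d F) (hG : IsQC S s d' G)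
    (ha : a ∈ S.G i) (b : R) (l u m : ℂ) :
    S.lb (u + m) (brkt ((-1 : ℂ) ^ (d * d').val) F G l m a) ((S.alpha ^ (k + s)) b) =
      (-1 : ℂ) ^ ((d + d') * i).val •
        S.lb u ((S.alpha ^ (k + s)) a) (brkt ((-1 : ℂ) ^ (d * d').val) F G l m b) := by
  have hsq := neg_one_pow_val_mul_self (A := ℂ) (d * d')
  rw [brkt, brkt, S.lb_sub_left, S.lb_smul_left, S.lb_sub_right, S.lb_smul_right,
    lb_qder_comp_qc hS hF hG ha, lb_qc_comp_qder hF.1 hG ha, add_mul, neg_one_pow_val_add]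
  match_scalars
  · linear_combination (-(-1 : ℂ) ^ (d' * i).val) * hsq
  · ring
  · ring

theorem qder_bracket_qc_general (S : Data R) (hS : IsHLCS S)
    (k s : ℕ) (d d' : ZMod 2) (F G : ℂ → R → R)
    (hF : IsQDer S k d F) (hG : IsQC S s d' G) :
    ∀ l : ℂ, IsQC S (k + s) (d + d') (brkt ((-1 : ℂ) ^ ((d * d').val)) F G l) :=
  fun l => ⟨hF.1.brkt hG.1 _ l, fun _ _ ha b u m => lb_brkt_qder_qc hS hF hG ha b l u m⟩

/-- For a multiplicative Hom-Lie conformal superalgebra `(R, α)`,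
`[QDer(R)_λ QC(R)] ⊆ QC(R)[λ]`: the commutator of a homogeneous
`α^k`-quasiderivation with a homogeneous `α^s`-quasicentroid is an
`α^{k+s}`-quasicentroid (with polynomial coefficients in `λ`). -/
theorem qder_bracket_qc (S : Data R) (hS : IsHLCS S) (hmult : S.Mult)
    (k s : ℕ) (d d' : ZMod 2) (F G : ℂ → R → R)
    (hF : IsQDer S k d F) (hG : IsQC S s d' G) :
    ∀ l : ℂ, IsQC S (k + s) (d + d') (brkt ((-1 : ℂ) ^ ((d * d').val)) F G l) :=
  qder_bracket_qc_general S hS k s d d' F G hF hG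

end HLCS
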